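/- For every integer n ≥ 2 and all i, j ∈ {1, …, n−1}, the entries of the matrix C_n satisfy c^{(n)}_{i,j} + Σ_{s=1}^{n} c^{(n)}_{s, i+j+1} = Σ_{s=i}^{n} c^{(n)}_{s, j+1}, where by convention c^{(n)}_{a,b} := 0 whenever a or b lies outside {1, …, n}. -/

import Mathlib

/-- The entries `c^{(n)}_{i,j}` of the matrices `C_n`, defined by `C_1 = (1)` and
`C_{n+1} = (τ C_n) ⊕ (1)`, where `(τ A)_{i,j} = Σ_{s=i-1}^{n} a_{s,j}` (with the
convention `a_{0,j} = 0`). Entries with an index outside `{1, …, n}` are `0`. -/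
def cMat : ℕ → ℕ → ℕ → ℕ
  | 0, _, _ => 0
  | 1, i, j => if i = 1 ∧ j = 1 then 1 else 0
  | n + 2, i, j =>
      if 1 ≤ i ∧ i ≤ n + 1 ∧ 1 ≤ j ∧ j ≤ n + 1 then
        ∑ s ∈ Finset.Icc (i - 1) (n + 1), cMat (n + 1) s j
      else if i = n + 2 ∧ j = n + 2 then 1 else 0

/-!
Inside the block `{1, …, n}²`, `C_{n+1}` is `τ C_n`. Applying this twice and using the symmetry
of `C_{n+1}` gives `c^{(n+2)}_{i,j} = Σ_{s ≥ i-1} Σ_{t ≥ j-1} c^{(n)}_{t,s}` there, which is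
symmetric once `C_n` is; so every `C_n` is symmetric. The first row of `C_{n+1}` consists of the
column sums of `C_n`, so symmetry turns the recursion for the first column of `C_{n+2}` into a
recursion for column sums: `Σ_s c^{(n+1)}_{s,k} = Σ_{u ≥ k-1} Σ_s c^{(n)}_{s,u}`.

The identity then follows by induction on `n`: for `j < n`, each of its three terms at level
`n + 1` and indices `(i, j)` is the sum over `t ∈ [i-1, n-1]` of the same term at level `n` and
indices `(t, j)`, while the column `j = n` is checked directly.
-/

open Finset

theorem Finset.sum_Icc_add' {M : Type*} [AddCommMonoid M] (f : ℕ → M) (a b c : ℕ) :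
    ∑ t ∈ Icc a b, f (t + c) = ∑ u ∈ Icc (a + c) (b + c), f u := by
  rw [← map_add_right_Icc, sum_map]
  rfl

lemma cMat_zero_left (n j : ℕ) : cMat n 0 j = 0 := by
  rcases n with _ | _ | n <;> simp [cMat]

lemma cMat_zero_right (n i : ℕ) : cMat n i 0 = 0 := by
  rcases n with _ | _ | n <;> simp [cMat]

lemma cMat_succ_of_not_block {n i j : ℕ} (h : ¬(1 ≤ i ∧ i ≤ n ∧ 1 ≤ j ∧ j ≤ n)) :
    cMat (n + 1) i j = if i = n + 1 ∧ j = n + 1 then 1 else 0 := by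
  rcases n with _ | n
  · rfl
  · exact if_neg h

lemma cMat_eq_zero_of_lt_right {n j : ℕ} (i : ℕ) (h : n < j) : cMat n i j = 0 := by
  rcases n with _ | n
  · rfl
  · rw [cMat_succ_of_not_block (by omega), if_neg (by omega)]

lemma cMat_last_row (n j : ℕ) : cMat (n + 1) (n + 1) j = if j = n + 1 then 1 else 0 := by
  simp [cMat_succ_of_not_block (n := n) (i := n + 1) (j := j) (by omega)]

lemma cMat_last_col (n i : ℕ) : cMat (n + 1) i (n + 1) = if i = n + 1 then 1 else 0 := by
  simp [cMat_succ_of_not_block (n := n) (i := i) (j := n + 1) (by omega)]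

lemma sum_Icc_cMat_last_col {n a : ℕ} (ha : a ≤ n + 1) :
    ∑ s ∈ Icc a (n + 1), cMat (n + 1) s (n + 1) = 1 := by
  simp [cMat_last_col, ha]

lemma sum_Icc_zero_cMat (n k : ℕ) :
    ∑ s ∈ Icc 0 n, cMat n s k = ∑ s ∈ Icc 1 n, cMat n s k := by
  rw [← insert_Icc_add_one_left_eq_Icc (Nat.zero_le n), sum_insert (by simp), cMat_zero_left,
    zero_add, zero_add]

lemma cMat_succ_eq_sum {n i : ℕ} (j : ℕ) (hi : 1 ≤ i) (hin : i ≤ n) :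
    cMat (n + 1) i j = ∑ s ∈ Icc (i - 1) n, cMat n s j := by
  by_cases hj : 1 ≤ j ∧ j ≤ n
  · obtain ⟨n, rfl⟩ : ∃ m, n = m + 1 := ⟨n - 1, by omega⟩
    exact if_pos ⟨hi, hin, hj⟩
  · rw [cMat_succ_of_not_block (by omega), if_neg (by omega)]
    refine (sum_eq_zero fun s _ => ?_).symm
    rcases Nat.eq_zero_or_pos j with rfl | hj0
    · exact cMat_zero_right n s
    · exact cMat_eq_zero_of_lt_right s (by omega)

lemma cMat_succ_succ_eq_sum {n i j : ℕ} (hi : 1 ≤ i) (hin : i ≤ n + 1) (hjn : j ≤ n) :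
    cMat (n + 2) i j = ∑ t ∈ Icc (i - 1) n, cMat (n + 1) t j := by
  rw [cMat_succ_eq_sum j hi hin, sum_Icc_succ_top (by omega), cMat_last_row, if_neg (by omega),
    add_zero]

lemma cMat_penultimate_col {n i : ℕ} (hi : 1 ≤ i) (hin : i ≤ n + 1) :
    cMat (n + 2) i (n + 1) = 1 := by
  rw [cMat_succ_eq_sum _ hi hin, sum_Icc_cMat_last_col (by omega)]

lemma cMat_succ_succ_eq_sum_sum {n i j : ℕ} (hsymm : ∀ a b, cMat (n + 1) a b = cMat (n + 1) b a)
    (hi : 1 ≤ i) (hin : i ≤ n + 1) (hj : 1 ≤ j) (hjn : j ≤ n) :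
    cMat (n + 2) i j = ∑ s ∈ Icc (i - 1) n, ∑ t ∈ Icc (j - 1) n, cMat n t s := by
  rw [cMat_succ_succ_eq_sum hi hin hjn]
  exact sum_congr rfl fun s _ => by rw [hsymm, cMat_succ_eq_sum s hj hjn]

theorem cMat_symm (n i j : ℕ) : cMat n i j = cMat n j i := by
  induction n using Nat.twoStepInduction generalizing i j with
  | zero => rfl
  | one => simp [cMat, and_comm]
  | more n ih ih1 =>
    by_cases h : 1 ≤ i ∧ i ≤ n + 1 ∧ 1 ≤ j ∧ j ≤ n + 1
    · wlog hji : j ≤ i generalizing i j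
      · exact (this j i (by omega) (by omega)).symm
      obtain ⟨hi, hin, hj, hjn⟩ := h
      rcases (by omega : i ≤ n ∨ i = n + 1) with hin' | rfl
      · rw [cMat_succ_succ_eq_sum_sum ih1 hi hin hj (by omega),
          cMat_succ_succ_eq_sum_sum ih1 hj hjn hi hin', sum_comm]
        simp_rw [ih]
      · rcases (by omega : j ≤ n ∨ j = n + 1) with hjn' | rfl
        · obtain ⟨n, rfl⟩ : ∃ m, n = m + 1 := ⟨n - 1, by omega⟩
          rw [cMat_penultimate_col hj hjn, cMat_succ_succ_eq_sum_sum ih1 hi hin hj hjn',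
            Nat.add_sub_cancel, Icc_self, sum_singleton, sum_Icc_cMat_last_col (by omega)]
        · rfl
    · rw [cMat_succ_of_not_block h, cMat_succ_of_not_block (by omega)]
      simp only [and_comm]

lemma cMat_succ_first_row {n : ℕ} (hn : 1 ≤ n) (k : ℕ) :
    cMat (n + 1) 1 k = ∑ s ∈ Icc 1 n, cMat n s k := by
  rw [cMat_succ_eq_sum k le_rfl hn, Nat.sub_self, sum_Icc_zero_cMat]

lemma sum_col_cMat_succ {n K : ℕ} (hn : 1 ≤ n) (hK : 1 ≤ K) :
    ∑ s ∈ Icc 1 (n + 1), cMat (n + 1) s K =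
      ∑ u ∈ Icc (K - 1) n, ∑ s ∈ Icc 1 n, cMat n s u := by
  by_cases hKn : K ≤ n + 1
  · rw [← cMat_succ_first_row (by omega), cMat_symm, cMat_succ_eq_sum 1 hK hKn,
      sum_Icc_succ_top (by omega), cMat_last_row, if_neg (by omega), add_zero]
    exact sum_congr rfl fun u _ => by rw [cMat_symm, cMat_succ_first_row hn]
  · rw [Icc_eq_empty (show ¬K - 1 ≤ n by omega), sum_empty]
    exact sum_eq_zero fun s _ => cMat_eq_zero_of_lt_right s (by omega)

lemma sum_col_cMat_succ_succ_add {n i : ℕ} (j : ℕ) (hi : 1 ≤ i) :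
    ∑ s ∈ Icc 1 (n + 2), cMat (n + 2) s (i + j + 1) =
      ∑ t ∈ Icc (i - 1) n, ∑ s ∈ Icc 1 (n + 1), cMat (n + 1) s (t + j + 1) := by
  calc ∑ s ∈ Icc 1 (n + 2), cMat (n + 2) s (i + j + 1)
      = ∑ u ∈ Icc (i + j) (n + 1), ∑ s ∈ Icc 1 (n + 1), cMat (n + 1) s u := by
        rw [sum_col_cMat_succ (by omega) (by omega), Nat.add_sub_cancel]
    _ = ∑ u ∈ Icc (i - 1 + (j + 1)) (n + (j + 1)),
          ∑ s ∈ Icc 1 (n + 1), cMat (n + 1) s u := by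
        refine sum_subset (Icc_subset_Icc (by omega) (by omega)) fun u hu hu' => ?_
        simp only [mem_Icc] at hu hu'
        exact sum_eq_zero fun s _ => cMat_eq_zero_of_lt_right s (by omega)
    _ = _ := (sum_Icc_add' _ _ _ _).symm

lemma sum_Icc_cMat_succ_succ {n i k : ℕ} (hi : 1 ≤ i) (hin : i ≤ n + 1) (hk : k ≤ n + 1) :
    ∑ s ∈ Icc i (n + 2), cMat (n + 2) s k =
      ∑ t ∈ Icc (i - 1) n, ∑ u ∈ Icc t (n + 1), cMat (n + 1) u k := by
  obtain ⟨i, rfl⟩ : ∃ i', i = i' + 1 := ⟨i - 1, by omega⟩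
  rw [sum_Icc_succ_top (by omega), cMat_last_row, if_neg (by omega), add_zero,
    ← sum_Icc_add', Nat.add_sub_cancel]
  refine sum_congr rfl fun t ht => ?_
  rw [cMat_succ_eq_sum k (by omega) (by simp only [mem_Icc] at ht; omega), Nat.add_sub_cancel]

lemma cMat_pascal_last_col {n i : ℕ} (hi : 1 ≤ i) (hin : i ≤ n + 1) :
    cMat (n + 2) i (n + 1) + ∑ s ∈ Icc 1 (n + 2), cMat (n + 2) s (i + (n + 1) + 1) =
      ∑ s ∈ Icc i (n + 2), cMat (n + 2) s (n + 1 + 1) := by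
  rw [cMat_penultimate_col hi hin, sum_eq_zero fun s _ => cMat_eq_zero_of_lt_right s (by omega)]
  exact (sum_Icc_cMat_last_col (by omega)).symm

lemma cMat_pascal_succ_succ {n : ℕ}
    (ih : ∀ t j, 1 ≤ t → t ≤ n → 1 ≤ j → j ≤ n →
      cMat (n + 1) t j + ∑ s ∈ Icc 1 (n + 1), cMat (n + 1) s (t + j + 1) =
        ∑ s ∈ Icc t (n + 1), cMat (n + 1) s (j + 1))
    {i j : ℕ} (hi : 1 ≤ i) (hin : i ≤ n + 1) (hj : 1 ≤ j) (hjn : j ≤ n) :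
    cMat (n + 2) i j + ∑ s ∈ Icc 1 (n + 2), cMat (n + 2) s (i + j + 1) =
      ∑ s ∈ Icc i (n + 2), cMat (n + 2) s (j + 1) := by
  rw [cMat_succ_succ_eq_sum hi hin hjn, sum_col_cMat_succ_succ_add j hi,
    sum_Icc_cMat_succ_succ hi hin (by omega), ← sum_add_distrib]
  refine sum_congr rfl fun t ht => ?_
  rcases Nat.eq_zero_or_pos t with rfl | ht0
  · simp only [cMat_zero_left, zero_add, sum_Icc_zero_cMat]
  · exact ih t j ht0 (mem_Icc.1 ht).2 hj hjn

/-- For `n ≥ 2` and `i, j ∈ {1, …, n−1}`: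
`c^{(n)}_{i,j} + Σ_{s=1}^{n} c^{(n)}_{s,i+j+1} = Σ_{s=i}^{n} c^{(n)}_{s,j+1}`
(entries with an index outside `{1, …, n}` being `0`). -/
theorem cMat_pascal_identity (n : ℕ) (hn : 2 ≤ n) (i j : ℕ)
    (hi : i ∈ Finset.Icc 1 (n - 1)) (hj : j ∈ Finset.Icc 1 (n - 1)) :
    cMat n i j + ∑ s ∈ Finset.Icc 1 n, cMat n s (i + j + 1) =
      ∑ s ∈ Finset.Icc i n, cMat n s (j + 1) := by
  rw [mem_Icc] at hi hj
  induction n, hn using Nat.le_induction generalizing i j with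
  | base =>
    obtain rfl : i = 1 := by omega
    obtain rfl : j = 1 := by omega
    decide
  | succ n hn ih =>
    obtain ⟨n, rfl⟩ : ∃ m, n = m + 1 := ⟨n - 1, by omega⟩
    rcases (by omega : j ≤ n ∨ j = n + 1) with hjn | rfl
    · exact cMat_pascal_succ_succ (fun t k ht htn hk hkn => ih t k (by omega) (by omega))
        hi.1 (by omega) hj.1 hjn
    · exact cMat_pascal_last_col hi.1 (by omega)
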